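/- On S³ ⊂ ℂ² with positive weights a1, a2, the vector fields Z₁(z) = σ^{-1}(−i|z₂|²z₁, i|z₁|²z₂) and Z₂(z) = σ^{-1}(|z₂|²z₁, −|z₁|²z₂) satisfy [Z₁, Z₂] = −2σ^{-3}|z₁|²|z₂|² ξ_a at every point of S³, where ξ_a(z) = (i a1 z1, i a2 z2) and σ = a1|z₁|² + a2|z₂|². -/

import Mathlib

open Complex

/-!
Write `Zᵢ = σ⁻¹ Vᵢ` with `V₁ = (-i|z₂|²z₁, i|z₁|²z₂)` and `V₂ = (|z₂|²z₁, -|z₁|²z₂)`. Both fields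
multiply each coordinate by a scalar function; such multiplications commute, so only the
derivatives of the coefficients survive in `[V₁, V₂]`, which comes out as `-2|z₁|²|z₂|² i z`.
`V₁` only rotates phases, so it preserves `|z₁|²`, `|z₂|²` and hence `σ`, while
`V₂ σ = 2(a₁ - a₂)|z₁|²|z₂|²`. The product rule `[fV, fW] = f (V f • W - W f • V + f [V, W])`
with `f = σ⁻¹` then gives the bracket, and on the sphere `(a₁ - a₂) V₁ - σ i z = -ξ_a`.
-/

open VectorField ContinuousLinearMap ComplexConjugate
open scoped InnerProductSpace

section Calculus

variable {E : Type*} [NormedAddCommGroup E] [NormedSpace ℝ E] {x : E}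

theorem HasFDerivAt.normSq {f : E → ℂ} {f' : E →L[ℝ] ℂ} (hf : HasFDerivAt f f' x) :
    HasFDerivAt (fun y => normSq (f y)) (2 • (innerSL ℝ (f x)).comp f') x := by
  simpa only [normSq_eq_norm_sq] using hf.norm_sq

theorem HasFDerivAt.ofReal {f : E → ℝ} {f' : E →L[ℝ] ℝ} (hf : HasFDerivAt f f' x) :
    HasFDerivAt (fun y => (f y : ℂ)) (ofRealCLM.comp f') x :=
  ofRealCLM.hasFDerivAt.comp x hf

theorem HasFDerivAt.fun_inv {c : E → ℝ} {c' : E →L[ℝ] ℝ} (hc : HasFDerivAt c c' x)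
    (hx : c x ≠ 0) : HasFDerivAt (fun y => (c y)⁻¹) (-(c x ^ 2)⁻¹ • c') x := by
  refine ((hasFDerivAt_inv (𝕜 := ℝ) hx).comp x hc).congr_fderiv ?_
  ext v
  simp [mul_comm]

theorem lieBracket_smul_smul {f : E → ℝ} {V W : E → E} (hf : DifferentiableAt ℝ f x)
    (hV : DifferentiableAt ℝ V x) (hW : DifferentiableAt ℝ W x) :
    lieBracket ℝ (fun y ↦ f y • V y) (fun y ↦ f y • W y) x =
      f x • (fderiv ℝ f x (V x) • W x - fderiv ℝ f x (W x) • V x + f x • lieBracket ℝ V W x) := by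
  rw [lieBracket_smul_left hf hV, lieBracket_smul_right hf hW]
  simp only [map_smul, smul_eq_mul, neg_smul, mul_smul, smul_add, smul_sub]
  abel

end Calculus

def diagField (g h : ℂ × ℂ → ℂ) (w : ℂ × ℂ) : ℂ × ℂ := (g w * w.1, h w * w.2)

section DiagField

variable {g h k l : ℂ × ℂ → ℂ} {g' h' k' l' : ℂ × ℂ →L[ℝ] ℂ} {z : ℂ × ℂ}

theorem HasFDerivAt.diagField (hg : HasFDerivAt g g' z) (hh : HasFDerivAt h h' z) :
    HasFDerivAt (diagField g h)
      ((g z • fst ℝ ℂ ℂ + z.1 • g').prod (h z • snd ℝ ℂ ℂ + z.2 • h')) z :=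
  (hg.fun_mul hasFDerivAt_fst).prodMk (hh.fun_mul hasFDerivAt_snd)

theorem lieBracket_diagField (hg : HasFDerivAt g g' z) (hh : HasFDerivAt h h' z)
    (hk : HasFDerivAt k k' z) (hl : HasFDerivAt l l' z) :
    lieBracket ℝ (diagField g h) (diagField k l) z =
      ((k' (diagField g h z) - g' (diagField k l z)) * z.1,
        (l' (diagField g h z) - h' (diagField k l z)) * z.2) := by
  rw [lieBracket, (hg.diagField hh).fderiv, (hk.diagField hl).fderiv]
  simp only [diagField, prod_apply, add_apply, smul_apply, coe_fst', coe_snd',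
    smul_eq_mul, Prod.mk_sub_mk]
  congr 1 <;> ring

end DiagField

def phaseField : ℂ × ℂ → ℂ × ℂ :=
  diagField (fun w => -I * normSq w.2) (fun w => I * normSq w.1)

def radialField : ℂ × ℂ → ℂ × ℂ :=
  diagField (fun w => normSq w.2) (fun w => -(normSq w.1 : ℂ))

def weightedNormSq (a1 a2 : ℝ) (w : ℂ × ℂ) : ℝ := a1 * normSq w.1 + a2 * normSq w.2

section Fields

variable (a1 a2 : ℝ) (z : ℂ × ℂ)

theorem inner_fst_phaseField : ⟪z.1, (phaseField z).1⟫_ℝ = 0 := by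
  simp only [phaseField, diagField, Complex.inner, mul_re, mul_im, neg_re, neg_im, ofReal_re,
    ofReal_im, conj_re, conj_im, I_re, I_im]
  ring

theorem inner_snd_phaseField : ⟪z.2, (phaseField z).2⟫_ℝ = 0 := by
  simp only [phaseField, diagField, Complex.inner, mul_re, mul_im, ofReal_re,
    ofReal_im, conj_re, conj_im, I_re, I_im]
  ring

theorem inner_fst_radialField : ⟪z.1, (radialField z).1⟫_ℝ = normSq z.1 * normSq z.2 := by
  simp only [radialField, diagField, Complex.inner, normSq_apply z.1, mul_re, mul_im, ofReal_re,
    ofReal_im, conj_re, conj_im]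
  ring

theorem inner_snd_radialField : ⟪z.2, (radialField z).2⟫_ℝ = -(normSq z.1 * normSq z.2) := by
  simp only [radialField, diagField, Complex.inner, normSq_apply z.2, mul_re, mul_im, neg_re,
    neg_im, ofReal_re, ofReal_im, conj_re, conj_im]
  ring

theorem hasFDerivAt_ofReal_normSq_fst :
    HasFDerivAt (fun w : ℂ × ℂ => (normSq w.1 : ℂ))
      (ofRealCLM.comp (2 • (innerSL ℝ z.1).comp (fst ℝ ℂ ℂ))) z :=
  hasFDerivAt_fst.normSq.ofReal

theorem hasFDerivAt_ofReal_normSq_snd :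
    HasFDerivAt (fun w : ℂ × ℂ => (normSq w.2 : ℂ))
      (ofRealCLM.comp (2 • (innerSL ℝ z.2).comp (snd ℝ ℂ ℂ))) z :=
  hasFDerivAt_snd.normSq.ofReal

theorem differentiableAt_phaseField : DifferentiableAt ℝ phaseField z :=
  (((hasFDerivAt_ofReal_normSq_snd z).const_mul (-I)).diagField
    ((hasFDerivAt_ofReal_normSq_fst z).const_mul I)).differentiableAt

theorem differentiableAt_radialField : DifferentiableAt ℝ radialField z :=
  ((hasFDerivAt_ofReal_normSq_snd z).diagField
    (hasFDerivAt_ofReal_normSq_fst z).fun_neg).differentiableAt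

theorem lieBracket_phaseField_radialField :
    lieBracket ℝ phaseField radialField z = (-2 * normSq z.1 * normSq z.2 : ℝ) • I • z := by
  have hn1 := hasFDerivAt_ofReal_normSq_fst z
  have hn2 := hasFDerivAt_ofReal_normSq_snd z
  have h := lieBracket_diagField (hn2.const_mul (-I)) (hn1.const_mul I) hn2 hn1.fun_neg
  rw [← phaseField, ← radialField] at h
  rw [h]
  simp only [smul_apply, comp_apply, neg_apply, ofRealCLM_apply, coe_fst', coe_snd',
    innerSL_apply_apply, inner_fst_phaseField, inner_snd_phaseField, inner_fst_radialField,
    inner_snd_radialField]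
  ext1 <;> simp only [Prod.smul_fst, Prod.smul_snd, smul_eq_mul, nsmul_eq_mul, real_smul] <;>
    push_cast <;> ring

theorem hasFDerivAt_weightedNormSq :
    HasFDerivAt (weightedNormSq a1 a2)
      (a1 • (2 • (innerSL ℝ z.1).comp (fst ℝ ℂ ℂ)) +
        a2 • (2 • (innerSL ℝ z.2).comp (snd ℝ ℂ ℂ))) z :=
  (hasFDerivAt_fst.normSq.const_mul a1).add (hasFDerivAt_snd.normSq.const_mul a2)

theorem fderiv_weightedNormSq_phaseField :
    fderiv ℝ (weightedNormSq a1 a2) z (phaseField z) = 0 := by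
  simp only [(hasFDerivAt_weightedNormSq a1 a2 z).fderiv, add_apply, smul_apply, comp_apply,
    coe_fst', coe_snd', innerSL_apply_apply, inner_fst_phaseField, inner_snd_phaseField]
  simp

theorem fderiv_weightedNormSq_radialField :
    fderiv ℝ (weightedNormSq a1 a2) z (radialField z) =
      2 * (a1 - a2) * (normSq z.1 * normSq z.2) := by
  simp only [(hasFDerivAt_weightedNormSq a1 a2 z).fderiv, add_apply, smul_apply, comp_apply,
    coe_fst', coe_snd', innerSL_apply_apply, inner_fst_radialField, inner_snd_radialField,
    smul_eq_mul, nsmul_eq_mul]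
  ring

theorem weightedNormSq_pos {a1 a2 : ℝ} (h1 : 0 < a1) (h2 : 0 < a2) {z : ℂ × ℂ}
    (hz : normSq z.1 + normSq z.2 = 1) : 0 < weightedNormSq a1 a2 z := by
  have := normSq_nonneg z.1
  have := normSq_nonneg z.2
  unfold weightedNormSq
  rcases le_total a1 a2 with h | h <;> nlinarith

end Fields

/-- On `S³ ⊂ ℂ²`, the Lie bracket `[Z₁, Z₂] = D Z₂ · Z₁ − D Z₁ · Z₂` of
`Z₁(z) = σ⁻¹(−i|z₂|²z₁, i|z₁|²z₂)` and `Z₂(z) = σ⁻¹(|z₂|²z₁, −|z₁|²z₂)` equals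
`−2σ⁻³|z₁|²|z₂|² ξ_a`, where `ξ_a(z) = (i a1 z₁, i a2 z₂)` and
`σ = a1|z₁|² + a2|z₂|²`. -/
theorem bracket_Z1_Z2 (a1 a2 : ℝ) (h1 : 0 < a1) (h2 : 0 < a2) :
    let ξ : ℂ × ℂ → ℂ × ℂ := fun z => (Complex.I * (a1 : ℂ) * z.1, Complex.I * (a2 : ℂ) * z.2)
    let Z1 : ℂ × ℂ → ℂ × ℂ := fun z =>
      ((a1 * Complex.normSq z.1 + a2 * Complex.normSq z.2)⁻¹ : ℝ) •
        ((-Complex.I * (Complex.normSq z.2 : ℂ) * z.1,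
          Complex.I * (Complex.normSq z.1 : ℂ) * z.2) : ℂ × ℂ)
    let Z2 : ℂ × ℂ → ℂ × ℂ := fun z =>
      ((a1 * Complex.normSq z.1 + a2 * Complex.normSq z.2)⁻¹ : ℝ) •
        (((Complex.normSq z.2 : ℂ) * z.1,
          -(Complex.normSq z.1 : ℂ) * z.2) : ℂ × ℂ)
    ∀ z : ℂ × ℂ, Complex.normSq z.1 + Complex.normSq z.2 = 1 →
      fderiv ℝ Z2 z (Z1 z) - fderiv ℝ Z1 z (Z2 z) =
        (-2 * ((a1 * Complex.normSq z.1 + a2 * Complex.normSq z.2)⁻¹) ^ 3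
            * Complex.normSq z.1 * Complex.normSq z.2 : ℝ) • ξ z := by
  intro ξ Z1 Z2 z hz
  have hσ := (weightedNormSq_pos h1 h2 hz).ne'
  have hinv := (hasFDerivAt_weightedNormSq a1 a2 z).differentiableAt.hasFDerivAt.fun_inv hσ
  change lieBracket ℝ (fun w => (weightedNormSq a1 a2 w)⁻¹ • phaseField w)
    (fun w => (weightedNormSq a1 a2 w)⁻¹ • radialField w) z = _
  rw [lieBracket_smul_smul hinv.differentiableAt (differentiableAt_phaseField z)
    (differentiableAt_radialField z), hinv.fderiv, lieBracket_phaseField_radialField]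
  simp only [smul_apply, smul_eq_mul, fderiv_weightedNormSq_phaseField,
    fderiv_weightedNormSq_radialField, mul_zero, zero_smul, zero_sub]
  have hz' : (normSq z.1 : ℂ) + normSq z.2 = 1 := by exact_mod_cast hz
  have hσ' : (a1 : ℂ) * normSq z.1 + a2 * normSq z.2 ≠ 0 := by exact_mod_cast hσ
  ext1 <;> simp only [phaseField, diagField, weightedNormSq, ξ, Prod.smul_fst, Prod.smul_snd,
    real_smul, smul_eq_mul, Prod.fst_add, Prod.snd_add, Prod.fst_neg, Prod.snd_neg] <;>
    push_cast <;> field_simp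
  · linear_combination (-(a1 : ℂ) * normSq z.1 * normSq z.2 * z.1) * hz'
  · linear_combination (-(a2 : ℂ) * normSq z.1 * normSq z.2 * z.2) * hz'
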